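/- arXiv:2507.07309 — 10 statements merged into one kernel-verified Lean document; each statement's English description precedes it below -/
import Mathlib

section
/- Let (D, ≤_D) and (E, ≤_E) be directed sets. Then D ≼_T E and E ≼_T D both hold if and only if there is a directed set (P, ≤_P) into which both (D, ≤_D) and (E, ≤_E) are cofinally embeddable. -/
universe u v w

/-- A directed preorder: a reflexive transitive relation in which every
pair of elements has an upper bound. -/
def DirectedPreorder {D : Type u} (r : D → D → Prop) : Prop :=
  Reflexive r ∧ Transitive r ∧ ∀ a b : D, ∃ c, r a c ∧ r b c

/-- A set is bounded if it has an upper bound. -/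
def BoundedIn {D : Type u} (r : D → D → Prop) (S : Set D) : Prop :=
  ∃ b, ∀ a ∈ S, r a b

/-- A Tukey map: maps unbounded sets onto unbounded sets. -/
def IsTukeyMap {D : Type u} {E : Type v} (rD : D → D → Prop) (rE : E → E → Prop)
    (f : D → E) : Prop :=
  ∀ S : Set D, ¬ BoundedIn rD S → ¬ BoundedIn rE (f '' S)

/-- A cofinal subset. -/
def CofinalIn {D : Type u} (r : D → D → Prop) (S : Set D) : Prop :=
  ∀ d, ∃ x ∈ S, r d x

/-- A convergent map: maps cofinal sets onto cofinal sets. -/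
def IsConvergentMap {D : Type u} {E : Type v} (rD : D → D → Prop) (rE : E → E → Prop)
    (f : D → E) : Prop :=
  ∀ S : Set D, CofinalIn rD S → CofinalIn rE (f '' S)

/-- Tukey reducibility: there is a Tukey map from `D` to `E`. -/
def TukeyReducible {D : Type u} {E : Type v} (rD : D → D → Prop) (rE : E → E → Prop) : Prop :=
  ∃ f : D → E, IsTukeyMap rD rE f

/-- An upward closed subset. -/
def UpClosed {E : Type v} (r : E → E → Prop) (A : Set E) : Prop :=
  ∀ e ∈ A, ∀ e', r e e' → e' ∈ A

/-- The completion of a directed set: all nonempty upward closed subsets. -/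
def Completion (E : Type v) (r : E → E → Prop) : Type v :=
  {A : Set E // A.Nonempty ∧ UpClosed r A}

/-- The completion is ordered by reverse inclusion. -/
def completionLe {E : Type v} (r : E → E → Prop) (A B : Completion E r) : Prop :=
  B.1 ⊆ A.1

/-- Pre-Tukey reducibility: Tukey reducibility to the completion. -/
def PreTukeyReducible {D : Type u} {E : Type v} (rD : D → D → Prop)
    (rE : E → E → Prop) : Prop :=
  TukeyReducible rD (completionLe rE)

/-- A pre-Tukey map from `(D, rD)` to `(E, rE)`. -/
def IsPreTukeyMap {D : Type u} {E : Type v} (rD : D → D → Prop) (rE : E → E → Prop)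
    (π : D → Set E) : Prop :=
  (∀ d, (π d).Nonempty) ∧
  ∀ e, ∃ d, ∀ d', (π d' ∩ {e' | rE e' e}).Nonempty → rD d' d

/-- A pre-convergent map from `(D, rD)` to `(E, rE)`. -/
def IsPreConvergentMap {D : Type u} {E : Type v} (rD : D → D → Prop) (rE : E → E → Prop)
    (σ : D → Set E) : Prop :=
  (∀ d, (σ d).Nonempty) ∧
  ∀ e, ∃ d, ∀ d', rD d d' → σ d' ⊆ {e' | rE e e'}

/-- A cofinal embedding. -/
def CofinalEmbedding {D : Type u} {P : Type w} (rD : D → D → Prop) (rP : P → P → Prop)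
    (f : D → P) : Prop :=
  (∀ a b, rD a b ↔ rP (f a) (f b)) ∧ ∀ p, ∃ d, rP p (f d)

/-- Auxiliary relation on the sum of two directed sets, with cross relations
mediated by maps `σ : D → E` and `τ : E → D`. -/
def sumRel {D : Type u} {E : Type v} (rD : D → D → Prop) (rE : E → E → Prop)
    (σ : D → E) (τ : E → D) : D ⊕ E → D ⊕ E → Prop
  | .inl d, .inl d' => rD d d'
  | .inl d, .inr e => ∃ d', rD d d' ∧ rE (σ d') e
  | .inr e, .inl d => ∃ e', rE e e' ∧ rD (τ e') d
  | .inr e, .inr e' => rE e e'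

theorem tukey_equiv_iff_cofinally_embeddable {D : Type u} {E : Type v}
    (rD : D → D → Prop) (rE : E → E → Prop)
    (hD : DirectedPreorder rD) (hE : DirectedPreorder rE) :
    (TukeyReducible rD rE ∧ TukeyReducible rE rD) ↔
      ∃ (P : Type (max u v)) (rP : P → P → Prop), DirectedPreorder rP ∧
        (∃ f : D → P, CofinalEmbedding rD rP f) ∧
        (∃ g : E → P, CofinalEmbedding rE rP g) := by
  obtain ⟨hDr, hDt, hDd⟩ := hD
  obtain ⟨hEr, hEt, hEd⟩ := hE
  constructor
  · rintro ⟨⟨f, hf⟩, ⟨g, hg⟩⟩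
    -- the preimage under g of a principal down-set is bounded
    have bndS : ∀ x : D, BoundedIn rE {y | rD (g y) x} := by
      intro x
      by_contra h
      exact hg _ h ⟨x, by rintro a ⟨y, hy, rfl⟩; exact hy⟩
    have bndT : ∀ y : E, BoundedIn rD {x | rE (f x) y} := by
      intro y
      by_contra h
      exact hf _ h ⟨y, by rintro a ⟨x, hx, rfl⟩; exact hx⟩
    choose bS hbS using bndS
    choose bT hbT using bndT
    choose σ hσ1 hσ2 using fun x => hEd (bS x) (f x)
    choose τ hτ1 hτ2 using fun y => hDd (bT y) (g y)
    -- key Galois–Tukey properties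
    have σP : ∀ x y, rD (g y) x → rE y (σ x) := fun x y h => hEt (hbS x y h) (hσ1 x)
    have τP : ∀ y x, rE (f x) y → rD x (τ y) := fun y x h => hDt (hbT y x h) (hτ1 y)
    set rP := sumRel rD rE σ τ with hrP
    have trP : Transitive rP := by
      rintro (d|e) (d'|e') (d''|e'') h1 h2
      · exact hDt h1 h2
      · obtain ⟨d₁, h2a, h2b⟩ := h2
        exact ⟨d₁, hDt h1 h2a, h2b⟩
      · obtain ⟨d₁, h1a, h1b⟩ := h1
        obtain ⟨e₁, h2a, h2b⟩ := h2
        exact hDt h1a (hDt (τP e₁ d₁ (hEt (hσ2 d₁) (hEt h1b h2a))) h2b)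
      · obtain ⟨d₁, h1a, h1b⟩ := h1
        exact ⟨d₁, h1a, hEt h1b h2⟩
      · obtain ⟨e₁, h1a, h1b⟩ := h1
        exact ⟨e₁, h1a, hDt h1b h2⟩
      · obtain ⟨e₁, h1a, h1b⟩ := h1
        obtain ⟨d₁, h2a, h2b⟩ := h2
        exact hEt h1a (hEt (σP d₁ e₁ (hDt (hτ2 e₁) (hDt h1b h2a))) h2b)
      · obtain ⟨e₁, h2a, h2b⟩ := h2
        exact ⟨e₁, hEt h1 h2a, h2b⟩
      · exact hEt h1 h2
    have up : ∀ p, ∃ e, rP p (Sum.inr e) := by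
      rintro (d|e)
      · exact ⟨σ d, d, hDr d, hEr (σ d)⟩
      · exact ⟨e, hEr e⟩
    refine ⟨D ⊕ E, rP, ⟨?_, trP, ?_⟩, ⟨Sum.inl, fun a b => Iff.rfl, ?_⟩,
      ⟨Sum.inr, fun a b => Iff.rfl, up⟩⟩
    · rintro (d|e)
      · exact hDr d
      · exact hEr e
    · intro a b
      obtain ⟨ea, ha⟩ := up a
      obtain ⟨eb, hb⟩ := up b
      obtain ⟨c, hc1, hc2⟩ := hEd ea eb
      exact ⟨Sum.inr c, trP ha hc1, trP hb hc2⟩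
    · rintro (d|e)
      · exact ⟨d, hDr d⟩
      · exact ⟨τ e, e, hEr e, hDr (τ e)⟩
  · rintro ⟨P, rP, ⟨hPr, hPt, hPd⟩, ⟨F, hFemb, hFcof⟩, ⟨G, hGemb, hGcof⟩⟩
    constructor
    · choose h hh using fun d => hGcof (F d)
      refine ⟨h, fun S hS hb => hS ?_⟩
      obtain ⟨b, hbb⟩ := hb
      obtain ⟨d₀, hd₀⟩ := hFcof (G b)
      refine ⟨d₀, fun a ha => ?_⟩
      exact (hFemb a d₀).2
        (hPt (hh a) (hPt ((hGemb _ _).1 (hbb _ ⟨a, ha, rfl⟩)) hd₀))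
    · choose h hh using fun e => hFcof (G e)
      refine ⟨h, fun S hS hb => hS ?_⟩
      obtain ⟨b, hbb⟩ := hb
      obtain ⟨e₀, he₀⟩ := hGcof (F b)
      refine ⟨e₀, fun a ha => ?_⟩
      exact (hGemb a e₀).2
        (hPt (hh a) (hPt ((hFemb _ _).1 (hbb _ ⟨a, ha, rfl⟩)) he₀))
end

section
/- Let (D, ≤_D) and (E, ≤_E) be directed sets. Then D ≼_pT E if and only if there is a pre-Tukey map from (D, ≤_D) to (E, ≤_E). -/
universe u v w

theorem preTukey_iff_preTukey_map {D : Type u} {E : Type v}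
    (rD : D → D → Prop) (rE : E → E → Prop)
    (hD : DirectedPreorder rD) (hE : DirectedPreorder rE) :
    PreTukeyReducible rD rE ↔ ∃ π : D → Set E, IsPreTukeyMap rD rE π := by
  obtain ⟨hErefl, hEtrans, hEdir⟩ := hE
  constructor
  · rintro ⟨f, hf⟩
    refine ⟨fun d => (f d).1, fun d => (f d).2.1, fun e => ?_⟩
    -- consider the set of d' whose image meets the down-set of e
    set S : Set D := {d' | ((f d').1 ∩ {e' | rE e' e}).Nonempty} with hS
    by_cases hb : BoundedIn rD S
    · obtain ⟨b, hb⟩ := hb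
      exact ⟨b, fun d' hd' => hb d' hd'⟩
    · exfalso
      apply hf S hb
      refine ⟨⟨{e' | rE e e'}, ⟨e, hErefl e⟩, fun x hx y hxy => hEtrans hx hxy⟩, ?_⟩
      rintro a ⟨d', hd', rfl⟩
      intro x hx
      obtain ⟨e₀, he₀, he₀e⟩ := hd'
      exact (f d').2.2 e₀ he₀ x (hEtrans he₀e hx)
  · rintro ⟨π, hπne, hπ⟩
    refine ⟨fun d => ⟨{e' | ∃ e ∈ π d, rE e e'}, ?_, ?_⟩, ?_⟩
    · obtain ⟨e, he⟩ := hπne d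
      exact ⟨e, e, he, hErefl e⟩
    · rintro x ⟨e, he, hex⟩ y hxy
      exact ⟨e, he, hEtrans hex hxy⟩
    · intro S hS hBdd
      obtain ⟨b, hb⟩ := hBdd
      obtain ⟨e, he⟩ := b.2.1
      obtain ⟨d₀, hd₀⟩ := hπ e
      apply hS
      refine ⟨d₀, fun d' hd' => ?_⟩
      have := hb _ ⟨d', hd', rfl⟩ he
      obtain ⟨e₀, he₀, he₀e⟩ := this
      exact hd₀ d' ⟨e₀, he₀, he₀e⟩
end

section
/- Let (D, ≤_D) and (E, ≤_E) be directed sets. Then D ≼_pT E if and only if there is a pre-convergent map from (E, ≤_E) to (D, ≤_D). -/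
universe u v w

theorem preTukey_iff_preConvergent_map {D : Type u} {E : Type v}
    (rD : D → D → Prop) (rE : E → E → Prop)
    (hD : DirectedPreorder rD) (hE : DirectedPreorder rE) :
    PreTukeyReducible rD rE ↔ ∃ σ : E → Set D, IsPreConvergentMap rE rD σ := by
  constructor
  · rintro ⟨f, hf⟩
    refine ⟨fun e => {d | ∀ d', e ∈ (f d').1 → rD d' d}, ?_, ?_⟩
    · intro e
      -- the preimage-type set T(e) = {d | e ∈ f d} is bounded
      have hb : BoundedIn rD {d | e ∈ (f d).1} := by
        by_contra h
        refine hf _ h ⟨⟨{e' | rE e e'}, ⟨e, hE.1 e⟩,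
          fun a ha a' haa' => hE.2.1 ha haa'⟩, ?_⟩
        rintro A ⟨d, hd, rfl⟩
        intro e' he'
        exact (f d).2.2 e hd e' he'
      obtain ⟨b, hbb⟩ := hb
      exact ⟨b, fun d' hd' => hbb d' hd'⟩
    · intro d
      obtain ⟨e, he⟩ := (f d).2.1
      refine ⟨e, fun e' hee' x hx => hx d ((f d).2.2 e he e' hee')⟩
  · rintro ⟨σ, hσ1, hσ2⟩
    refine ⟨fun d => ⟨{e | ∀ e', rE e e' → σ e' ⊆ {d' | rD d d'}}, ?_, ?_⟩, ?_⟩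
    · obtain ⟨e, he⟩ := hσ2 d
      exact ⟨e, he⟩
    · intro e hmem e' hee' e'' he''
      exact hmem e'' (hE.2.1 hee' he'')
    · intro S hS hBdd
      apply hS
      obtain ⟨B, hB⟩ := hBdd
      obtain ⟨e₀, he₀⟩ := B.2.1
      obtain ⟨x, hx⟩ := hσ1 e₀
      refine ⟨x, fun d hd => ?_⟩
      have hmem : e₀ ∈ {e | ∀ e', rE e e' → σ e' ⊆ {d' | rD d d'}} :=
        hB _ ⟨d, hd, rfl⟩ he₀
      exact hmem e₀ (hE.1 e₀) hx
end

section
/- Let (D, ≤_D) and (E, ≤_E) be directed sets and f : D → E. Define π_f : D → 𝒫(E) by π_f(d) = {e ∈ E | f(d) ≤_E e}. If f is a Tukey map, then π_f is a pre-Tukey map from (D, ≤_D) to (E, ≤_E). -/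
universe u v w

theorem tukey_map_gives_preTukey_map {D : Type u} {E : Type v}
    (rD : D → D → Prop) (rE : E → E → Prop)
    (hD : DirectedPreorder rD) (hE : DirectedPreorder rE)
    (f : D → E) (hf : IsTukeyMap rD rE f) :
    IsPreTukeyMap rD rE (fun d => {e : E | rE (f d) e}) := by
  obtain ⟨hrefl, htrans, -⟩ := hE
  constructor
  · exact fun d => ⟨f d, hrefl (f d)⟩
  · intro e
    set S : Set D := {d' | rE (f d') e} with hS
    have hb : BoundedIn rE (f '' S) := ⟨e, by rintro a ⟨d', hd', rfl⟩; exact hd'⟩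
    have hSb : BoundedIn rD S := by
      by_contra h
      exact hf S h hb
    obtain ⟨d, hd⟩ := hSb
    refine ⟨d, fun d' ⟨e', he1, he2⟩ => hd d' ?_⟩
    exact htrans he1 he2
end

section
/- Let (D, ≤_D) and (E, ≤_E) be directed sets, let π : D → 𝒫(E) be a pre-Tukey map, and let f : D → E be any function satisfying f(d) ∈ π(d) for every d ∈ D. Then f is a Tukey map from (D, ≤_D) to (E, ≤_E). -/
universe u v w

theorem selection_of_preTukey_is_tukey {D : Type u} {E : Type v}
    (rD : D → D → Prop) (rE : E → E → Prop)
    (hD : DirectedPreorder rD) (hE : DirectedPreorder rE)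
    (π : D → Set E) (hπ : IsPreTukeyMap rD rE π)
    (f : D → E) (hf : ∀ d, f d ∈ π d) :
    IsTukeyMap rD rE f := by
  intro S hS ⟨e, he⟩
  obtain ⟨d, hd⟩ := hπ.2 e
  exact hS ⟨d, fun a ha => hd a ⟨f a, hf a, he _ ⟨a, ha, rfl⟩⟩⟩
end

section
/- Let (D, ≤_D) and (E, ≤_E) be directed sets, let π : D → 𝒫(E) be a pre-convergent map, and let f : D → E be any function satisfying f(d) ∈ π(d) for every d ∈ D. Then f is a convergent map from (D, ≤_D) to (E, ≤_E). -/
universe u v w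

theorem selection_of_preConvergent_is_convergent {D : Type u} {E : Type v}
    (rD : D → D → Prop) (rE : E → E → Prop)
    (hD : DirectedPreorder rD) (hE : DirectedPreorder rE)
    (π : D → Set E) (hπ : IsPreConvergentMap rD rE π)
    (f : D → E) (hf : ∀ d, f d ∈ π d) :
    IsConvergentMap rD rE f := by
  intro S hS e
  obtain ⟨d, hd⟩ := hπ.2 e
  obtain ⟨x, hxS, hdx⟩ := hS d
  exact ⟨f x, ⟨x, hxS, rfl⟩, hd x hdx (hf x)⟩
end

section
/- Let (D, ≤_D) and (E, ≤_E) be directed sets. Then D ≼_pT E and E ≼_pT D both hold if and only if there is a directed set (P, ≤_P) into which both (D, ≤_D) and (E, ≤_E) are cofinally embeddable. -/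
universe u v w

/-- Auxiliary lemma for the easy direction. -/
private lemma preTukey_of_common {D : Type u} {E : Type v} {P : Type w}
    (rD : D → D → Prop) (rE : E → E → Prop) (rP : P → P → Prop)
    (hP : DirectedPreorder rP) (f : D → P) (g : E → P)
    (hf : CofinalEmbedding rD rP f) (hg : CofinalEmbedding rE rP g) :
    PreTukeyReducible rD rE := by
  obtain ⟨hrefl, htrans, hdir⟩ := hP
  refine ⟨fun d => ⟨{e | rP (f d) (g e)}, ?_, ?_⟩, ?_⟩
  · obtain ⟨e, he⟩ := hg.2 (f d)
    exact ⟨e, he⟩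
  · intro e he e' hee'
    exact htrans he ((hg.1 e e').1 hee')
  · intro S hS hbd
    obtain ⟨B, hB⟩ := hbd
    obtain ⟨e, he⟩ := B.2.1
    obtain ⟨d₀, hd₀⟩ := hf.2 (g e)
    apply hS
    refine ⟨d₀, fun a ha => ?_⟩
    have h1 : B.1 ⊆ {e' | rP (f a) (g e')} := hB _ ⟨a, ha, rfl⟩
    exact (hf.1 a d₀).2 (htrans (h1 he) hd₀)

theorem preTukey_equiv_iff_cofinally_embeddable {D : Type u} {E : Type v}
    (rD : D → D → Prop) (rE : E → E → Prop)
    (hD : DirectedPreorder rD) (hE : DirectedPreorder rE) :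
    (PreTukeyReducible rD rE ∧ PreTukeyReducible rE rD) ↔
      ∃ (P : Type (max u v)) (rP : P → P → Prop), DirectedPreorder rP ∧
        (∃ f : D → P, CofinalEmbedding rD rP f) ∧
        (∃ g : E → P, CofinalEmbedding rE rP g) := by
  constructor
  · rintro ⟨⟨φ, hφ⟩, ⟨ψ, hψ⟩⟩
    obtain ⟨rD_refl, rD_trans, rD_dir⟩ := hD
    obtain ⟨rE_refl, rE_trans, rE_dir⟩ := hE
    -- bound functions
    have Hh : ∀ e : E, ∃ b : D, ∀ d : D, e ∈ (φ d).1 → rD d b := by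
      intro e
      by_contra hc
      push_neg at hc
      have hunb : ¬ BoundedIn rD {d | e ∈ (φ d).1} := by
        rintro ⟨b, hb⟩
        obtain ⟨d, hd1, hd2⟩ := hc b
        exact hd2 (hb d hd1)
      refine hφ _ hunb ⟨⟨{e' | rE e e'}, ⟨e, rE_refl e⟩,
        fun a ha a' haa' => rE_trans ha haa'⟩, ?_⟩
      rintro A ⟨d, hd, rfl⟩
      intro e' he'
      exact (φ d).2.2 e hd e' he'
    have Hk : ∀ d : D, ∃ b : E, ∀ e : E, d ∈ (ψ e).1 → rE e b := by
      intro d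
      by_contra hc
      push_neg at hc
      have hunb : ¬ BoundedIn rE {e | d ∈ (ψ e).1} := by
        rintro ⟨b, hb⟩
        obtain ⟨e, he1, he2⟩ := hc b
        exact he2 (hb e he1)
      refine hψ _ hunb ⟨⟨{d' | rD d d'}, ⟨d, rD_refl d⟩,
        fun a ha a' haa' => rD_trans ha haa'⟩, ?_⟩
      rintro A ⟨e, he, rfl⟩
      intro d' hd'
      exact (ψ e).2.2 d he d' hd'
    choose h hh using Hh
    choose k hk using Hk
    -- monotonized set-valued maps
    set u0 : D → Set E := fun d => {e | ∃ d₂, rD d d₂ ∧ e ∈ (φ d₂).1} with hu0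
    set v0 : E → Set D := fun e => {d | ∃ e₂, rE e e₂ ∧ d ∈ (ψ e₂).1} with hv0
    set u : D → Set E := fun d => {e | e ∈ u0 d ∧ ∀ e₀, d ∈ v0 e₀ → rE e₀ e} with hu
    set v : E → Set D := fun e => {d | d ∈ v0 e ∧ ∀ d₀, e ∈ u d₀ → rD d₀ d} with hv
    have u0_up : ∀ d e e', e ∈ u0 d → rE e e' → e' ∈ u0 d := by
      rintro d e e' ⟨d₂, hd₂, he⟩ hee'
      exact ⟨d₂, hd₂, (φ d₂).2.2 e he e' hee'⟩
    have v0_up : ∀ e d d', d ∈ v0 e → rD d d' → d' ∈ v0 e := by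
      rintro e d d' ⟨e₂, he₂, hd⟩ hdd'
      exact ⟨e₂, he₂, (ψ e₂).2.2 d hd d' hdd'⟩
    have v0_mono : ∀ e e', rE e e' → v0 e' ⊆ v0 e := by
      rintro e e' hee' d ⟨e₂, he₂, hd⟩
      exact ⟨e₂, rE_trans hee' he₂, hd⟩
    have Hu0 : ∀ d e, e ∈ u0 d → rD d (h e) := by
      rintro d e ⟨d₂, hd₂, he⟩
      exact rD_trans hd₂ (hh e d₂ he)
    have Hv0 : ∀ e d, d ∈ v0 e → rE e (k d) := by
      rintro e d ⟨e₂, he₂, hd⟩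
      exact rE_trans he₂ (hk d e₂ hd)
    have u_up : ∀ d e e', e ∈ u d → rE e e' → e' ∈ u d := by
      rintro d e e' ⟨h1, h2⟩ hee'
      exact ⟨u0_up d e e' h1 hee', fun e₀ he₀ => rE_trans (h2 e₀ he₀) hee'⟩
    have u_mono : ∀ d d', rD d d' → u d' ⊆ u d := by
      rintro d d' hdd' e ⟨⟨d₂, hd₂, he⟩, h2⟩
      exact ⟨⟨d₂, rD_trans hdd' hd₂, he⟩,
        fun e₀ he₀ => h2 e₀ (v0_up e₀ d d' he₀ hdd')⟩
    have u_ne : ∀ d, (u d).Nonempty := by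
      intro d
      obtain ⟨e₂, he₂⟩ := (φ d).2.1
      obtain ⟨e₁, he₁, hke₁⟩ := rE_dir e₂ (k d)
      refine ⟨e₁, u0_up d e₂ e₁ ⟨d, rD_refl d, he₂⟩ he₁, ?_⟩
      intro e₀ he₀
      exact rE_trans (Hv0 e₀ d he₀) hke₁
    have Hu : ∀ d e, e ∈ u d → rD d (h e) := fun d e he => Hu0 d e he.1
    have v_up : ∀ e d d', d ∈ v e → rD d d' → d' ∈ v e := by
      rintro e d d' ⟨h1, h2⟩ hdd'
      exact ⟨v0_up e d d' h1 hdd', fun d₀ hd₀ => rD_trans (h2 d₀ hd₀) hdd'⟩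
    have v_mono : ∀ e e', rE e e' → v e' ⊆ v e := by
      rintro e e' hee' d ⟨h1, h2⟩
      exact ⟨v0_mono e e' hee' h1,
        fun d₀ hd₀ => h2 d₀ (u_up d₀ e e' hd₀ hee')⟩
    have v_ne : ∀ e, (v e).Nonempty := by
      intro e
      obtain ⟨d₂, hd₂⟩ := (ψ e).2.1
      obtain ⟨d₁, hd₁, hhd₁⟩ := rD_dir d₂ (h e)
      refine ⟨d₁, v0_up e d₂ d₁ ⟨e, rE_refl e, hd₂⟩ hd₁, ?_⟩
      intro d₀ hd₀
      exact rD_trans (Hu d₀ e hd₀) hhd₁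
    -- the amalgam
    set rP : D ⊕ E → D ⊕ E → Prop := fun x y =>
      match x, y with
      | Sum.inl d, Sum.inl d' => rD d d'
      | Sum.inl d, Sum.inr e => (∀ d₁ ∈ v e, rD d d₁) ∧ e ∈ u d
      | Sum.inr e, Sum.inl d => d ∈ v e ∧ (∀ e₁ ∈ u d, rE e e₁)
      | Sum.inr e, Sum.inr e' => rE e e' with hrP
    have rP_refl : Reflexive rP := by
      rintro (d | e)
      · exact rD_refl d
      · exact rE_refl e
    have rP_trans : Transitive rP := by
      rintro (d | e) (d' | e') (d'' | e'') hxy hyz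
      · exact rD_trans hxy hyz
      · exact ⟨fun d₁ hd₁ => rD_trans hxy (hyz.1 d₁ hd₁), u_mono d d' hxy hyz.2⟩
      · exact hxy.1 d'' hyz.1
      · exact ⟨fun d₁ hd₁ => hxy.1 d₁ (v_mono e' e'' hyz hd₁),
          u_up d e' e'' hxy.2 hyz⟩
      · exact ⟨v_up e d' d'' hxy.1 hyz, fun e₁ he₁ => hxy.2 e₁ (u_mono d' d'' hyz he₁)⟩
      · exact hxy.2 e'' hyz.2
      · exact ⟨v_mono e e' hxy hyz.1, fun e₁ he₁ => rE_trans hxy (hyz.2 e₁ he₁)⟩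
      · exact rE_trans hxy hyz
    have cofD : ∀ x : D ⊕ E, ∃ d : D, rP x (Sum.inl d) := by
      rintro (d₀ | e)
      · exact ⟨d₀, rD_refl d₀⟩
      · obtain ⟨d, hd⟩ := v_ne e
        exact ⟨d, hd, fun e₁ he₁ => he₁.2 e hd.1⟩
    have cofE : ∀ x : D ⊕ E, ∃ e : E, rP x (Sum.inr e) := by
      rintro (d | e₀)
      · obtain ⟨e, he⟩ := u_ne d
        exact ⟨e, fun d₁ hd₁ => hd₁.2 d he, he⟩
      · exact ⟨e₀, rE_refl e₀⟩
    refine ⟨D ⊕ E, rP, ⟨rP_refl, rP_trans, ?_⟩,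
      ⟨Sum.inl, fun a b => Iff.rfl, cofD⟩, ⟨Sum.inr, fun a b => Iff.rfl, cofE⟩⟩
    intro x y
    obtain ⟨d₁, hd₁⟩ := cofD x
    obtain ⟨d₂, hd₂⟩ := cofD y
    obtain ⟨d₃, h₁₃, h₂₃⟩ := rD_dir d₁ d₂
    exact ⟨Sum.inl d₃, rP_trans hd₁ h₁₃, rP_trans hd₂ h₂₃⟩
  · rintro ⟨P, rP, hP, ⟨f, hf⟩, ⟨g, hg⟩⟩
    exact ⟨preTukey_of_common rD rE rP hP f g hf hg,
      preTukey_of_common rE rD rP hP g f hg hf⟩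
end

section
/- Let WO be the set of all binary relations on ℕ (coded as elements x of ℕ → ℕ → Bool) that are well-orderings of a subset of ℕ, and for x ∈ WO let o(x) denote the order type of the well-ordering coded by x. For x, y ∈ WO write x ⊴ y if either o(x) < o(y), or o(x) = o(y) and x is lexicographically at most y (with respect to a fixed enumeration of ℕ × ℕ). Then ⊴ is a linear (total) ordering on WO, and the map π : ω₁ → 𝒫(WO) defined by π(ξ) = {x ∈ WO | o(x) = ξ} is both a pre-Tukey map and a pre-convergent map from (ω₁, ≤) to (WO, ⊴); consequently (ω₁, ≤) ≼_pT (WO, ⊴) and (WO, ⊴) ≼_pT (ω₁, ≤). -/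
universe u v w

/-- The strict relation coded by `x` on its field `{n | x n n = true}`. -/
def woRel (x : ℕ → ℕ → Bool) (a b : {n : ℕ // x n n = true}) : Prop :=
  a.1 ≠ b.1 ∧ x a.1 b.1 = true

/-- `x` codes a well-ordering of a subset of ℕ. -/
def IsWOCode (x : ℕ → ℕ → Bool) : Prop :=
  IsWellOrder {n : ℕ // x n n = true} (woRel x)

open Classical in
/-- The order type of the well-ordering coded by `x`. -/
noncomputable def otype (x : ℕ → ℕ → Bool) : Ordinal :=
  if h : IsWOCode x then @Ordinal.type _ (woRel x) h else 0

/-- The lexicographic ordering on codes, with respect to the enumeration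
`Nat.unpair` of ℕ × ℕ. -/
def lexLe (x y : ℕ → ℕ → Bool) : Prop :=
  x = y ∨ ∃ n : ℕ,
    (∀ m < n, x (Nat.unpair m).1 (Nat.unpair m).2 = y (Nat.unpair m).1 (Nat.unpair m).2) ∧
    x (Nat.unpair n).1 (Nat.unpair n).2 < y (Nat.unpair n).1 (Nat.unpair n).2

/-- The ordering ⊴ : first compare order types, then lexicographically. -/
def triLe (x y : ℕ → ℕ → Bool) : Prop :=
  otype x < otype y ∨ (otype x = otype y ∧ lexLe x y)

/-- The set WO of codes of well-orderings of subsets of ℕ, as a type. -/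
def WOCode : Type := {x : ℕ → ℕ → Bool // IsWOCode x}

/-- ω₁, the set of countable ordinals. -/
def Omega1 : Type 1 := {o : Ordinal // o < (Cardinal.aleph 1).ord}


namespace WoAux

lemma eq_of_F_eq {x y : ℕ → ℕ → Bool}
    (h : ∀ n, x (Nat.unpair n).1 (Nat.unpair n).2 = y (Nat.unpair n).1 (Nat.unpair n).2) :
    x = y := by
  funext a b
  have := h (Nat.pair a b)
  simpa [Nat.unpair_pair] using this

lemma lexLe_refl (x : ℕ → ℕ → Bool) : lexLe x x := Or.inl rfl

lemma lexLe_total (x y : ℕ → ℕ → Bool) : lexLe x y ∨ lexLe y x := by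
  by_cases hxy : x = y
  · exact Or.inl (Or.inl hxy)
  · have hne : ∃ n, x (Nat.unpair n).1 (Nat.unpair n).2 ≠ y (Nat.unpair n).1 (Nat.unpair n).2 := by
      by_contra h
      push_neg at h
      exact hxy (eq_of_F_eq h)
    classical
    set n := Nat.find hne with hn
    have h1 := Nat.find_spec hne
    have h2 : ∀ m < n, x (Nat.unpair m).1 (Nat.unpair m).2 = y (Nat.unpair m).1 (Nat.unpair m).2 :=
      fun m hm => by
        by_contra hc; exact absurd hm (Nat.not_lt.2 (Nat.find_le hc))
    rcases lt_or_gt_of_ne h1 with h | h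
    · exact Or.inl (Or.inr ⟨n, h2, h⟩)
    · exact Or.inr (Or.inr ⟨n, fun m hm => (h2 m hm).symm, h⟩)

lemma lexLe_trans {x y z : ℕ → ℕ → Bool} (h1 : lexLe x y) (h2 : lexLe y z) : lexLe x z := by
  rcases h1 with rfl | ⟨n1, he1, hl1⟩
  · exact h2
  rcases h2 with rfl | ⟨n2, he2, hl2⟩
  · exact Or.inr ⟨n1, he1, hl1⟩
  rcases lt_trichotomy n1 n2 with h | rfl | h
  · exact Or.inr ⟨n1, fun m hm => (he1 m hm).trans (he2 m (hm.trans h)),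
      hl1.trans_le (le_of_eq (he2 n1 h))⟩
  · exact Or.inr ⟨n1, fun m hm => (he1 m hm).trans (he2 m hm), lt_trans hl1 hl2⟩
  · exact Or.inr ⟨n2, fun m hm => (he1 m (hm.trans h)).trans (he2 m hm),
      (he1 n2 h) ▸ hl2⟩

lemma lexLe_antisymm {x y : ℕ → ℕ → Bool} (h1 : lexLe x y) (h2 : lexLe y x) : x = y := by
  rcases h1 with rfl | ⟨n1, he1, hl1⟩
  · rfl
  rcases h2 with rfl | ⟨n2, he2, hl2⟩
  · rfl
  rcases lt_trichotomy n1 n2 with h | rfl | h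
  · exact absurd ((he2 n1 h) ▸ hl1) (lt_irrefl _)
  · exact absurd (hl1.trans hl2) (lt_irrefl _)
  · exact absurd ((he1 n2 h) ▸ hl2) (lt_irrefl _)

lemma triLe_refl (x : ℕ → ℕ → Bool) : triLe x x := Or.inr ⟨rfl, lexLe_refl x⟩

lemma triLe_trans {x y z : ℕ → ℕ → Bool} (h1 : triLe x y) (h2 : triLe y z) : triLe x z := by
  rcases h1 with h1 | ⟨h1, h1'⟩ <;> rcases h2 with h2 | ⟨h2, h2'⟩
  · exact Or.inl (h1.trans h2)
  · exact Or.inl (h2 ▸ h1)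
  · exact Or.inl (h1 ▸ h2)
  · exact Or.inr ⟨h1.trans h2, lexLe_trans h1' h2'⟩

lemma triLe_antisymm {x y : ℕ → ℕ → Bool} (h1 : triLe x y) (h2 : triLe y x) : x = y := by
  rcases h1 with h1 | ⟨h1, h1'⟩ <;> rcases h2 with h2 | ⟨h2, h2'⟩
  · exact absurd (h1.trans h2) (lt_irrefl _)
  · exact absurd h1 (h2 ▸ lt_irrefl _)
  · exact absurd h2 (h1 ▸ lt_irrefl _)
  · exact lexLe_antisymm h1' h2'

lemma triLe_total (x y : ℕ → ℕ → Bool) : triLe x y ∨ triLe y x := by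
  rcases lt_trichotomy (otype x) (otype y) with h | h | h
  · exact Or.inl (Or.inl h)
  · rcases lexLe_total x y with h' | h'
    · exact Or.inl (Or.inr ⟨h, h'⟩)
    · exact Or.inr (Or.inr ⟨h.symm, h'⟩)
  · exact Or.inr (Or.inl h)

lemma otype_le_of_triLe {x y : ℕ → ℕ → Bool} (h : triLe x y) : otype x ≤ otype y := by
  rcases h with h | ⟨h, _⟩
  · exact le_of_lt h
  · exact le_of_eq h

lemma otype_lt {x : ℕ → ℕ → Bool} (hx : IsWOCode x) : otype x < (Cardinal.aleph 1).ord := by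
  rw [otype, dif_pos hx, Cardinal.lt_ord]
  have : (@Ordinal.type _ (woRel x) hx).card = Cardinal.mk {n : ℕ // x n n = true} :=
    @Ordinal.card_type _ _ hx
  rw [this]
  exact lt_of_le_of_lt Cardinal.mk_le_aleph0 Cardinal.aleph0_lt_aleph_one

lemma succ_lt {o : Ordinal} (h : o < (Cardinal.aleph 1).ord) :
    o + 1 < (Cardinal.aleph 1).ord := by
  rw [Ordinal.add_one_eq_succ]
  exact (Cardinal.isSuccLimit_ord (Cardinal.aleph0_le_aleph 1)).succ_lt h

lemma exists_code (o : Ordinal) (ho : o < (Cardinal.aleph 1).ord) :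
    ∃ x : ℕ → ℕ → Bool, IsWOCode x ∧ otype x = o := by
  classical
  have hcard : Cardinal.mk o.ToType ≤ Cardinal.aleph0 := by
    have h := Cardinal.lt_ord.1 ho
    rw [← Cardinal.succ_aleph0, Order.lt_succ_iff] at h
    rwa [Cardinal.mk_toType]
  have : Countable o.ToType := Cardinal.mk_le_aleph0_iff.1 hcard
  obtain ⟨f, hf⟩ := exists_injective_nat o.ToType
  set x : ℕ → ℕ → Bool :=
    fun a b => decide (∃ α β : o.ToType, f α = a ∧ f β = b ∧ α ≤ β) with hxdef
  have hmem : ∀ n, x n n = true ↔ ∃ α, f α = n := by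
    intro n
    simp only [hxdef, decide_eq_true_iff]
    constructor
    · rintro ⟨α, β, hα, hβ, _⟩; exact ⟨α, hα⟩
    · rintro ⟨α, hα⟩; exact ⟨α, α, hα, hα, le_refl _⟩
  have hxy : ∀ α β : o.ToType, (x (f α) (f β) = true ↔ α ≤ β) := by
    intro α β
    simp only [hxdef, decide_eq_true_iff]
    constructor
    · rintro ⟨α', β', hα, hβ, hle⟩
      rwa [hf hα, hf hβ] at hle
    · intro h; exact ⟨α, β, rfl, rfl, h⟩
  let e : o.ToType ≃ {n : ℕ // x n n = true} :=
    Equiv.ofBijective (fun α => ⟨f α, (hmem (f α)).2 ⟨α, rfl⟩⟩)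
      ⟨fun a b h => hf (congrArg Subtype.val h),
       fun ⟨n, hn⟩ => by
        obtain ⟨α, hα⟩ := (hmem n).1 hn
        exact ⟨α, Subtype.ext hα⟩⟩
  have hrel : ∀ α β : o.ToType, woRel x (e α) (e β) ↔ α < β := by
    intro α β
    show (f α ≠ f β ∧ x (f α) (f β) = true) ↔ α < β
    rw [hxy]
    constructor
    · rintro ⟨hne, hle⟩
      exact lt_of_le_of_ne hle (fun h => hne (congrArg f h))
    · intro h
      exact ⟨fun hc => absurd (hf hc) (ne_of_lt h), le_of_lt h⟩
  let iso : ((· < ·) : o.ToType → o.ToType → Prop) ≃r woRel x :=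
    ⟨e, fun {a b} => hrel a b⟩
  haveI : IsWellOrder o.ToType ((· < ·) : o.ToType → o.ToType → Prop) := isWellOrder_lt
  have hwo : IsWOCode x := iso.symm.toRelEmbedding.isWellOrder
  refine ⟨x, hwo, ?_⟩
  rw [otype, dif_pos hwo]
  have h1 : @Ordinal.type _ (woRel x) hwo =
      Ordinal.type ((· < ·) : o.ToType → o.ToType → Prop) :=
    (@Ordinal.type_eq _ _ _ _ hwo _).2 ⟨iso.symm⟩
  rw [h1, Ordinal.type_toType]

/-- Choose a code for each countable ordinal. -/
noncomputable def code (d : Omega1) : WOCode :=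
  ⟨(exists_code d.1 d.2).choose, (exists_code d.1 d.2).choose_spec.1⟩

lemma otype_code (d : Omega1) : otype (code d).1 = d.1 :=
  (exists_code d.1 d.2).choose_spec.2

end WoAux

theorem wo_pre_tukey_equivalent_omega1 :
    -- ⊴ is a linear (total) ordering on WO:
    (∀ x : WOCode, triLe x.1 x.1) ∧
    (∀ x y z : WOCode, triLe x.1 y.1 → triLe y.1 z.1 → triLe x.1 z.1) ∧
    (∀ x y : WOCode, triLe x.1 y.1 → triLe y.1 x.1 → x = y) ∧
    (∀ x y : WOCode, triLe x.1 y.1 ∨ triLe y.1 x.1) ∧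
    -- π(ξ) = {x ∈ WO | o(x) = ξ} is a pre-Tukey and a pre-convergent map
    -- from (ω₁, ≤) to (WO, ⊴):
    IsPreTukeyMap (fun a b : Omega1 => a.1 ≤ b.1) (fun x y : WOCode => triLe x.1 y.1)
      (fun ξ => {x : WOCode | otype x.1 = ξ.1}) ∧
    IsPreConvergentMap (fun a b : Omega1 => a.1 ≤ b.1) (fun x y : WOCode => triLe x.1 y.1)
      (fun ξ => {x : WOCode | otype x.1 = ξ.1}) ∧
    -- consequently (ω₁, ≤) ≼_pT (WO, ⊴) and (WO, ⊴) ≼_pT (ω₁, ≤):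
    PreTukeyReducible (fun a b : Omega1 => a.1 ≤ b.1) (fun x y : WOCode => triLe x.1 y.1) ∧
    PreTukeyReducible (fun x y : WOCode => triLe x.1 y.1) (fun a b : Omega1 => a.1 ≤ b.1)  := by
  classical
  refine ⟨fun x => WoAux.triLe_refl x.1,
          fun x y z h1 h2 => WoAux.triLe_trans h1 h2,
          fun x y h1 h2 => Subtype.ext (WoAux.triLe_antisymm h1 h2),
          fun x y => WoAux.triLe_total x.1 y.1, ?_, ?_, ?_, ?_⟩
  · -- pre-Tukey map
    constructor
    · intro d
      exact ⟨WoAux.code d, WoAux.otype_code d⟩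
    · intro e
      refine ⟨⟨otype e.1, WoAux.otype_lt e.2⟩, ?_⟩
      rintro d' ⟨z, hz1, hz2⟩
      have : otype z.1 ≤ otype e.1 := WoAux.otype_le_of_triLe hz2
      exact hz1 ▸ this
  · -- pre-convergent map
    constructor
    · intro d
      exact ⟨WoAux.code d, WoAux.otype_code d⟩
    · intro e
      refine ⟨⟨otype e.1 + 1, WoAux.succ_lt (WoAux.otype_lt e.2)⟩, ?_⟩
      intro d' hd' z hz
      have h1 : otype e.1 < otype e.1 + 1 := by
        rw [Ordinal.add_one_eq_succ]; exact Order.lt_succ _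
      have h2 : otype e.1 < otype z.1 := by
        rw [show otype z.1 = d'.1 from hz]
        exact lt_of_lt_of_le h1 hd'
      exact Or.inl h2
  · -- ω₁ ≼pT WO
    refine ⟨fun d => ⟨{y : WOCode | triLe (WoAux.code d).1 y.1},
      ⟨WoAux.code d, WoAux.triLe_refl _⟩,
      fun a ha a' h => WoAux.triLe_trans ha h⟩, ?_⟩
    intro S hS hB
    apply hS
    obtain ⟨B, hB⟩ := hB
    obtain ⟨e, he⟩ := B.2.1
    refine ⟨⟨otype e.1, WoAux.otype_lt e.2⟩, ?_⟩
    intro d hd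
    have h1 := hB _ ⟨d, hd, rfl⟩
    have h2 : triLe (WoAux.code d).1 e.1 := h1 he
    have h3 : otype (WoAux.code d).1 ≤ otype e.1 := WoAux.otype_le_of_triLe h2
    rw [WoAux.otype_code] at h3
    exact h3
  · -- WO ≼pT ω₁
    refine ⟨fun x => ⟨{a : Omega1 | otype x.1 ≤ a.1},
      ⟨⟨otype x.1, WoAux.otype_lt x.2⟩, show otype x.1 ≤ otype x.1 from le_refl _⟩,
      fun a ha a' h => le_trans ha h⟩, ?_⟩
    intro S hS hB
    apply hS
    obtain ⟨B, hB⟩ := hB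
    obtain ⟨a, ha⟩ := B.2.1
    refine ⟨WoAux.code ⟨a.1 + 1, WoAux.succ_lt a.2⟩, ?_⟩
    intro x hx
    have h1 := hB _ ⟨x, hx, rfl⟩
    have h2 : otype x.1 ≤ a.1 := h1 ha
    refine Or.inl ?_
    refine lt_of_lt_of_eq ?_ (WoAux.otype_code _).symm
    calc otype x.1 ≤ a.1 := h2
      _ < a.1 + 1 := by rw [Ordinal.add_one_eq_succ]; exact Order.lt_succ _
end

section
/- Let NWD be the set of all nowhere dense subsets of Cantor space 2^ω. There exist functions φ : ω^ω → ℳ and φ̃ : NWD^ω → ω^ω such that for every f ∈ ω^ω and every sequence ⟨F_n | n < ω⟩ of nowhere dense subsets of 2^ω, if φ(f) ⊆ ⋃_{n<ω} F_n then f ≤* φ̃(⟨F_n | n < ω⟩). -/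
universe u v w

section Helpers

open PiNat Set Filter


def Mset (h : ℕ → ℕ) : Set (ℕ → Bool) :=
  {x | ∃ N, ∀ n, N ≤ n → ∃ k, n ≤ k ∧ k < h n ∧ x k = true}

lemma isMeagre_Mset (h : ℕ → ℕ) : IsMeagre (Mset h) := by
  have hrw : Mset h =
      ⋃ N : ℕ, {x : ℕ → Bool | ∀ n, N ≤ n → ∃ k, n ≤ k ∧ k < h n ∧ x k = true} := by
    ext x; simp [Mset]
  rw [hrw]
  apply isMeagre_iUnion
  intro N
  set A : Set (ℕ → Bool) := {x | ∀ n, N ≤ n → ∃ k, n ≤ k ∧ k < h n ∧ x k = true} with hA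
  have hclosed : IsClosed A := by
    have : A = ⋂ n : ℕ, {x : ℕ → Bool | N ≤ n → ∃ k, n ≤ k ∧ k < h n ∧ x k = true} := by
      ext x; simp [hA]
    rw [this]
    refine isClosed_iInter fun n => ?_
    by_cases hn : N ≤ n
    · have : {x : ℕ → Bool | N ≤ n → ∃ k, n ≤ k ∧ k < h n ∧ x k = true}
          = ⋃ k ∈ Finset.Ico n (h n), {x : ℕ → Bool | x k = true} := by
        ext x; simp [hn, and_assoc]
      rw [this]
      exact isClosed_biUnion_finset fun k _ =>
        isClosed_eq (continuous_apply k) continuous_const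
    · have : {x : ℕ → Bool | N ≤ n → ∃ k, n ≤ k ∧ k < h n ∧ x k = true} = univ := by
        ext x; simp [hn]
      rw [this]; exact isClosed_univ
  have hint : interior A = ∅ := by
    rw [eq_empty_iff_forall_notMem]
    intro x hx
    have hnb : A ∈ nhds x := mem_interior_iff_mem_nhds.1 hx
    obtain ⟨t, ⟨z, m, rfl⟩, hxt, hta⟩ :=
      (isTopologicalBasis_cylinders fun _ : ℕ => Bool).mem_nhds_iff.1 hnb
    set w : ℕ → Bool := fun i => if i < m then x i else false with hwdef
    have hw : w ∈ cylinder z m := by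
      intro i hi
      simp only [hwdef, if_pos hi]
      exact hxt i hi
    obtain ⟨k, hk1, _, hk3⟩ := hta hw (max N m) (le_max_left _ _)
    have hkm : ¬ k < m := by omega
    simp [hwdef, hkm] at hk3
  rw [isMeagre_iff_countable_union_isNowhereDense]
  exact ⟨{A}, by simpa using hclosed.isNowhereDense_iff.mpr hint,
    countable_singleton _, by simp⟩

lemma exists_avoid (C : Set (ℕ → Bool)) (hC : IsClosed C) (hCi : interior C = ∅)
    (x : ℕ → Bool) (n : ℕ) :
    ∃ (z : ℕ → Bool) (m : ℕ), (∀ i, i < n → z i = x i) ∧ n ≤ m ∧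
      ∀ w : ℕ → Bool, (∀ i, i < m → w i = z i) → w ∉ C := by
  have hd : Dense Cᶜ := interior_eq_empty_iff_dense_compl.1 hCi
  obtain ⟨y, hyC, hyx⟩ := hd.exists_mem_open (isOpen_cylinder (fun _ : ℕ => Bool) x n) ⟨x, self_mem_cylinder x n⟩
  obtain ⟨t, ⟨z, m', rfl⟩, hyt, hts⟩ :=
    (isTopologicalBasis_cylinders fun _ : ℕ => Bool).mem_nhds_iff.1
      ((hC.isOpen_compl).mem_nhds hyC)
  refine ⟨y, max n m', fun i hi => hyx i hi, le_max_left _ _, fun w hw => ?_⟩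
  have : w ∈ cylinder z m' := by
    intro i hi
    rw [hw i (lt_of_lt_of_le hi (le_max_right n m')), hyt i hi]
  exact hts this

lemma interior_union_empty {X : Type*} [TopologicalSpace X] {s t : Set X}
    (hs : IsClosed s) (ht : IsClosed t)
    (hsi : interior s = ∅) (hti : interior t = ∅) : interior (s ∪ t) = ∅ := by
  rw [interior_eq_empty_iff_dense_compl] at hsi hti ⊢
  rw [compl_union]
  exact hsi.inter_of_isOpen_left hti hs.isOpen_compl

lemma cover_bound (F : ℕ → Set (ℕ → Bool)) (hF : ∀ n, IsNowhereDense (F n)) :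
    ∃ g : ℕ → ℕ, ∀ h : ℕ → ℕ, Monotone h → (∀ n, n < h n) →
      Mset h ⊆ (⋃ n, F n) → ∀ᶠ n in Filter.atTop, h n ≤ g n := by
  classical
  set C : ℕ → Set (ℕ → Bool) := fun n => ⋃ k ∈ Finset.range (n+1), closure (F k) with hCdef
  have hCcl : ∀ n, IsClosed (C n) := fun n =>
    isClosed_biUnion_finset fun _ _ => isClosed_closure
  have hclF : ∀ k, IsClosed (closure (F k)) := fun k => isClosed_closure
  have hintF : ∀ k, interior (closure (F k)) = ∅ := fun k => by
    have := (hF k).closure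
    rwa [IsNowhereDense, closure_closure] at this
  have hCint : ∀ n, interior (C n) = ∅ := by
    intro n
    induction n with
    | zero => simpa [hCdef] using hintF 0
    | succ n ih =>
      have hrw : C (n+1) = C n ∪ closure (F (n+1)) := by
        simp only [hCdef]
        rw [Finset.range_add_one, Finset.set_biUnion_insert, union_comm]
      rw [hrw]
      exact interior_union_empty (hCcl n) (hclF (n+1)) ih (hintF (n+1))
  have hFC : ∀ k n, k ≤ n → F k ⊆ C n := by
    intro k n hk z hz
    have hz2 : z ∈ closure (F k) := subset_closure hz
    simp only [hCdef, Set.mem_iUnion, Finset.mem_range]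
    exact ⟨k, by omega, hz2⟩
  have hav : ∀ (n : ℕ) (x : ℕ → Bool), ∃ (z : ℕ → Bool) (m : ℕ), (∀ i, i < n → z i = x i) ∧ n ≤ m ∧
      ∀ w : ℕ → Bool, (∀ i, i < m → w i = z i) → w ∉ C n :=
    fun n x => exists_avoid (C n) (hCcl n) (hCint n) x n
  choose Z Mf hZ1 hZ2 hZ3 using hav
  set pad : ∀ n : ℕ, (Fin n → Bool) → (ℕ → Bool) :=
    fun n s i => if h : i < n then s ⟨i, h⟩ else false with hpad
  set A : ℕ → (ℕ → Bool) → (ℕ → Bool) :=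
    fun n x => Z n (pad n (fun i : Fin n => x i)) with hAdef
  set B : ℕ → (ℕ → Bool) → ℕ :=
    fun n x => Mf n (pad n (fun i : Fin n => x i)) with hBdef
  have hA1 : ∀ n x i, i < n → A n x i = x i := by
    intro n x i hi
    show Z n (pad n (fun j : Fin n => x j)) i = x i
    rw [hZ1 n _ i hi]
    show (if h : i < n then x i else false) = x i
    rw [dif_pos hi]
  have hB1 : ∀ n x, n ≤ B n x := fun n x => hZ2 n _
  have hA3 : ∀ n x w, (∀ i, i < B n x → w i = A n x i) → w ∉ C n := fun n x => hZ3 n _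
  set g0 : ℕ → ℕ := fun n => Finset.univ.sup (fun s : Fin n → Bool => Mf n (pad n s))
    with hg0def
  have hB2 : ∀ n x, B n x ≤ g0 n := fun n x =>
    Finset.le_sup (f := fun s : Fin n → Bool => Mf n (pad n s))
      (b := fun i : Fin n => x i) (Finset.mem_univ _)
  set g : ℕ → ℕ := fun n => n + 1 + (Finset.range (n+1)).sup g0 with hgdef
  have hg0g : ∀ n, g0 n ≤ g n := fun n =>
    le_add_left (Finset.le_sup (Finset.self_mem_range_succ n))
  have hgmono : Monotone g := by
    intro a b hab
    exact add_le_add (by omega)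
      (Finset.sup_mono (Finset.range_subset_range.2 (by omega)))
  refine ⟨g, fun h hmono hlt hsub => ?_⟩
  by_contra hcon
  have hfreq : ∀ N, ∃ n, N ≤ n ∧ g n < h n := by
    intro N
    rw [Filter.not_eventually] at hcon
    obtain ⟨n, hn1, hn2⟩ := (Filter.frequently_atTop.1 hcon) N
    exact ⟨n, hn1, not_le.1 hn2⟩
  choose nxt hnxt1 hnxt2 using hfreq
  set st : ℕ → (ℕ → Bool) × ℕ := fun i =>
    (fun p : (ℕ → Bool) × ℕ =>
      ((fun k => if k < B p.2 p.1 then A p.2 p.1 k else true),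
        nxt (p.2 + B p.2 p.1 + 1)))^[i] ((fun _ => true), nxt 0) with hstdef
  set y : ℕ → ℕ → Bool := fun i => (st i).1 with hydef
  set nn : ℕ → ℕ := fun i => (st i).2 with hnndef
  set mm : ℕ → ℕ := fun i => B (nn i) (y i) with hmmdef
  set zz : ℕ → ℕ → Bool := fun i => A (nn i) (y i) with hzzdef
  have hst : ∀ i, st (i+1) =
      ((fun k => if k < mm i then zz i k else true), nxt (nn i + mm i + 1)) := by
    intro i
    have heq : st (i+1) = (fun p : (ℕ → Bool) × ℕ =>
        ((fun k => if k < B p.2 p.1 then A p.2 p.1 k else true),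
          nxt (p.2 + B p.2 p.1 + 1))) (st i) := Function.iterate_succ_apply' _ _ _
    rw [heq]
  have hyy : ∀ i, y (i+1) = fun k => if k < mm i then zz i k else true :=
    fun i => congrArg Prod.fst (hst i)
  have hnn : ∀ i, nn (i+1) = nxt (nn i + mm i + 1) :=
    fun i => congrArg Prod.snd (hst i)
  have hnn0 : nn 0 = nxt 0 := rfl
  have hnnS : ∀ i, g (nn i) < h (nn i) := by
    intro i
    cases i with
    | zero => rw [hnn0]; exact hnxt2 0
    | succ i => rw [hnn i]; exact hnxt2 _
  have hstep : ∀ i, nn i + mm i + 1 ≤ nn (i+1) := by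
    intro i; rw [hnn i]; exact hnxt1 _
  have hmmge : ∀ i, nn i ≤ mm i := fun i => hB1 _ _
  have hmmle : ∀ i, mm i ≤ g (nn i) := fun i => (hB2 _ _).trans (hg0g _)
  have hnnmono : ∀ i j, i ≤ j → nn i ≤ nn j := by
    intro i j hij
    induction j, hij using Nat.le_induction with
    | base => exact le_rfl
    | succ j hij ih => have := hstep j; omega
  have hnnge : ∀ i, i ≤ nn i := by
    intro i
    induction i with
    | zero => exact Nat.zero_le _
    | succ i ih =>
      have := hstep i
      omega
  have stab : ∀ i j, i ≤ j → ∀ k, k < nn i → y j k = y i k := by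
    intro i j hij
    induction j with
    | zero =>
      have : i = 0 := by omega
      subst this; intro k _; rfl
    | succ j ih =>
      intro k hk
      rcases Nat.lt_or_ge i (j+1) with hlt' | hge
      · have hij' : i ≤ j := by omega
        have hk2 : k < nn j := lt_of_lt_of_le hk (hnnmono i j hij')
        have hk3 : k < mm j := lt_of_lt_of_le hk2 (hmmge j)
        rw [hyy j]
        simp only [if_pos hk3]
        have hz : zz j k = y j k := hA1 (nn j) (y j) k hk2
        rw [hz]
        exact ih hij' k hk
      · have : i = j + 1 := by omega
        rw [this]
  set x : ℕ → Bool := fun k => y (k+1) k with hxdef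
  have hxy : ∀ i k, k < nn i → x k = y i k := by
    intro i k hk
    rcases le_total i (k+1) with hik | hik
    · exact stab i (k+1) hik k hk
    · have hk' : k < nn (k+1) := lt_of_lt_of_le (by omega) (hnnge (k+1))
      exact (stab (k+1) i hik k hk').symm
  have hxnot : x ∉ ⋃ n, F n := by
    intro hmem
    obtain ⟨j, hj⟩ := mem_iUnion.1 hmem
    have hxC : x ∈ C (nn j) := hFC j (nn j) (hnnge j) hj
    refine hA3 (nn j) (y j) x (fun k hk => ?_) hxC
    have hk' : k < mm j := hk
    have hk2 : k < nn (j+1) := by have := hstep j; omega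
    rw [hxy (j+1) k hk2, hyy j]
    simp only [if_pos hk']; rfl
  have hxM : x ∈ Mset h := by
    refine ⟨nn 0, fun n hn => ?_⟩
    have hex : ∃ i, n < nn i :=
      ⟨n+1, lt_of_lt_of_le (by omega) (hnnge (n+1))⟩
    have hj1 : n < nn (Nat.find hex) := Nat.find_spec hex
    have hj0 : Nat.find hex ≠ 0 := by
      intro h0
      rw [h0] at hj1
      omega
    obtain ⟨i, hieq⟩ : ∃ i, Nat.find hex = i + 1 := ⟨Nat.find hex - 1, by omega⟩
    rw [hieq] at hj1
    have hi1 : nn i ≤ n := by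
      have := Nat.find_min hex (m := i) (by omega)
      omega
    rcases le_or_gt (mm i) n with hcase | hcase
    · refine ⟨n, le_refl n, hlt n, ?_⟩
      rw [hxy (i+1) n hj1, hyy i]
      simp [not_lt.2 hcase]
    · refine ⟨mm i, by omega, ?_, ?_⟩
      · calc mm i ≤ g (nn i) := hmmle i
          _ < h (nn i) := hnnS i
          _ ≤ h n := hmono hi1
      · have hmmlt : mm i < nn (i+1) := by have := hstep i; omega
        rw [hxy (i+1) (mm i) hmmlt, hyy i]
        simp
  exact hxnot (hsub hxM)

end Helpers

theorem dominating_to_meager_maps :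
    ∃ (φ : (ℕ → ℕ) → Set (ℕ → Bool))
      (φt : {F : ℕ → Set (ℕ → Bool) // ∀ n, IsNowhereDense (F n)} → (ℕ → ℕ)),
      (∀ f : ℕ → ℕ, IsMeagre (φ f)) ∧
      ∀ (f : ℕ → ℕ) (F : {F : ℕ → Set (ℕ → Bool) // ∀ n, IsNowhereDense (F n)}),
        φ f ⊆ (⋃ n : ℕ, F.1 n) → ∀ᶠ n in Filter.cofinite, f n ≤ φt F n := by
  classical
  refine ⟨fun f => Mset (fun n => n + 1 + (Finset.range (n+1)).sup f),
    fun F => Classical.choose (cover_bound F.1 F.2), fun f => isMeagre_Mset _, ?_⟩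
  intro f F hsub
  have hmono : Monotone (fun n => n + 1 + (Finset.range (n+1)).sup f) := by
    intro a b hab
    exact add_le_add (by omega) (Finset.sup_mono (Finset.range_subset_range.2 (by omega)))
  have hlt : ∀ n, n < n + 1 + (Finset.range (n+1)).sup f := by intro n; omega
  have hspec := Classical.choose_spec (cover_bound F.1 F.2) _ hmono hlt hsub
  rw [Nat.cofinite_eq_atTop]
  filter_upwards [hspec] with n hn
  have h1 : f n ≤ (Finset.range (n+1)).sup f := Finset.le_sup (Finset.self_mem_range_succ n)
  omega
end

section
/- There is a Tukey map from (ω^ω, ≤*) to (ℳ, ⊆), where ℳ is the collection of meager subsets of Cantor space 2^ω ordered by inclusion; that is, (ω^ω, ≤*) ≼_T (ℳ, ⊆). -/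
universe u v w

section TukeyAux

open Set Filter

abbrev CS := ℕ → Bool

lemma cylOpen (p : CS) (I : Finset ℕ) : IsOpen {v : CS | ∀ i ∈ I, v i = p i} := by
  have h : {v : CS | ∀ i ∈ I, v i = p i} = (I : Set ℕ).pi (fun i => ({p i} : Set Bool)) := by
    ext v; simp [Set.mem_pi]
  rw [h]
  exact isOpen_set_pi I.finite_toSet (fun i _ => isOpen_discrete _)

lemma cylSub {U : Set CS} (hU : IsOpen U) {v : CS} (hv : v ∈ U) :
    ∃ I : Finset ℕ, ∀ v' : CS, (∀ i ∈ I, v' i = v i) → v' ∈ U := by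
  obtain ⟨I, t, h1, h2⟩ := isOpen_pi_iff.mp hU v hv
  refine ⟨I, fun v' hv' => h2 (Set.mem_pi.mpr fun a ha => ?_)⟩
  rw [hv' a ha]
  exact (h1 a ha).2

lemma intEmpty {F : Set CS} (h : IsMeagre F) : interior F = ∅ := by
  by_contra hne
  obtain ⟨v, hv⟩ := Set.nonempty_iff_ne_empty.mpr hne
  have hd : Dense Fᶜ := dense_of_mem_residual h
  obtain ⟨y, hy1, hy2⟩ := hd.exists_mem_open isOpen_interior ⟨v, hv⟩
  exact hy1 (interior_subset hy2)

lemma closedMeagre {F : Set CS} (hc : IsClosed F) (hi : interior F = ∅) : IsMeagre F := by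
  have : Dense Fᶜ := by rwa [← interior_eq_empty_iff_dense_compl]
  exact residual_of_dense_open hc.isOpen_compl this

lemma meagreUnion {s t : Set CS} (hs : IsMeagre s) (ht : IsMeagre t) : IsMeagre (s ∪ t) := by
  rw [IsMeagre, Set.compl_union]
  exact Filter.inter_mem hs ht


lemma extend {F : Set CS} (hc : IsClosed F) (hi : interior F = ∅) (m : ℕ) :
    ∃ m' : ℕ, ∃ b : CS, m < m' ∧ ∀ v : CS, (∀ i, m ≤ i → i < m' → v i = b i) → v ∉ F := by
  classical
  set φ : (Fin m → Bool) → CS → CS := fun t v i => if h : i < m then t ⟨i, h⟩ else v i with hφ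
  have hcont : ∀ t, Continuous (φ t) := by
    intro t
    apply continuous_pi
    intro i
    by_cases h : i < m
    · simpa [φ, h] using continuous_const
    · simpa [φ, h] using continuous_apply i
  set F' : Set CS := ⋃ t : Fin m → Bool, (φ t) ⁻¹' F with hF'
  have hF'c : IsClosed F' := isClosed_iUnion_of_finite (fun t => hc.preimage (hcont t))
  have hPint : ∀ t, interior ((φ t) ⁻¹' F) = ∅ := by
    intro t
    by_contra hne
    obtain ⟨v, hv⟩ := Set.nonempty_iff_ne_empty.mpr hne
    obtain ⟨I, hI⟩ := cylSub isOpen_interior hv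
    have hD : {w : CS | ∀ i ∈ I ∪ Finset.range m, w i = φ t v i} ⊆ F := by
      intro w hw
      set v'' : CS := fun i => if i < m then v i else w i with hv''
      have h1 : v'' ∈ (φ t) ⁻¹' F := by
        apply interior_subset (hI v'' ?_)
        intro i hiI
        by_cases h : i < m
        · simp [hv'', h]
        · have := hw i (Finset.mem_union_left _ hiI)
          simp only [hv'', if_neg h]
          rw [this]
          simp [hφ, h]
      have h2 : φ t v'' = w := by
        funext i
        by_cases h : i < m
        · have := hw i (Finset.mem_union_right _ (Finset.mem_range.mpr h))
          simp only [hφ] at this ⊢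
          rw [dif_pos h, this, dif_pos h]
        · simp [hφ, hv'', h]
      rw [← h2]
      exact h1
    have hmem : φ t v ∈ interior F :=
      interior_maximal hD (cylOpen (φ t v) (I ∪ Finset.range m)) (fun i _ => rfl)
    rw [hi] at hmem
    exact hmem
  have hF'm : IsMeagre F' := by
    rw [isMeagre_iff_countable_union_isNowhereDense]
    refine ⟨Set.range (fun t => (φ t) ⁻¹' F), ?_, Set.countable_range _, ?_⟩
    · rintro s ⟨t, rfl⟩
      exact ((hc.preimage (hcont t)).isNowhereDense_iff).mpr (hPint t)
    · rw [Set.sUnion_range]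
  have hne : F'ᶜ.Nonempty := by
    by_contra h
    have h2 : F' = univ := by
      have := Set.not_nonempty_iff_eq_empty.mp h
      rwa [Set.compl_empty_iff] at this
    have := intEmpty hF'm
    rw [h2, interior_univ] at this
    exact (Set.univ_nonempty).ne_empty this
  obtain ⟨p, hp⟩ := hne
  obtain ⟨I, hI⟩ := cylSub hF'c.isOpen_compl hp
  refine ⟨m + 1 + (I.sup id + 1), p, by omega, ?_⟩
  intro v hv hvF
  set q : CS := fun i => if i < m then p i else v i with hq
  have hqF' : q ∈ F' := by
    apply Set.mem_iUnion.mpr ⟨fun j : Fin m => v j.1, ?_⟩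
    have : φ (fun j : Fin m => v j.1) q = v := by
      funext i
      by_cases h : i < m <;> simp [hφ, hq, h]
    simp only [Set.mem_preimage, this]
    exact hvF
  have hqc : q ∈ F'ᶜ := by
    apply hI q
    intro i hiI
    by_cases h : i < m
    · simp [hq, h]
    · have hib : i < m + 1 + (I.sup id + 1) := by
        have : i ≤ I.sup id := Finset.le_sup (f := id) hiI
        omega
      have := hv i (le_of_not_gt h) hib
      simp [hq, h, this]
  exact hqc hqF'

lemma chopped {M : Set CS} (hM : IsMeagre M) :
    ∃ u : ℕ → ℕ, ∃ w : CS, u 0 = 0 ∧ StrictMono u ∧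
      ∀ v ∈ M, ∃ N, ∀ n, N ≤ n → ∃ i, u n ≤ i ∧ i < u (n + 1) ∧ v i ≠ w i := by
  classical
  obtain ⟨S, hSo, hSd, hSc, hSi⟩ := mem_residual_iff.mp hM
  obtain ⟨f, hf⟩ := (hSc.insert univ).exists_eq_range (Set.insert_nonempty _ _)
  have hmem : ∀ j, f j ∈ insert univ S := fun j => hf ▸ Set.mem_range_self j
  have hfo : ∀ j, IsOpen (f j) := by
    intro j
    rcases hmem j with h | h
    · rw [h]; exact isOpen_univ
    · exact hSo _ h
  have hfd : ∀ j, Dense (f j) := by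
    intro j
    rcases hmem j with h | h
    · rw [h]; exact dense_univ
    · exact hSd _ h
  have hcov : ∀ v ∈ M, ∃ j, v ∉ f j := by
    intro v hv
    by_contra h
    push_neg at h
    have h1 : v ∈ ⋂₀ (insert univ S) := by
      rw [hf, Set.sInter_range]
      exact Set.mem_iInter.mpr h
    have h2 : v ∈ ⋂₀ S := fun s hs => h1 s (Set.mem_insert_of_mem _ hs)
    exact hSi h2 hv
  -- complements of f j : closed with empty interior
  have hfc : ∀ j, IsClosed (f j)ᶜ := fun j => (hfo j).isClosed_compl
  have hfi : ∀ j, interior (f j)ᶜ = ∅ := by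
    intro j
    rw [interior_compl, (hfd j).closure_eq, Set.compl_univ]
  -- increasing closed meagre sets G n
  set G : ℕ → Set CS := fun n => Nat.rec ((f 0)ᶜ) (fun k Gk => Gk ∪ (f (k + 1))ᶜ) n with hG
  have hGsucc : ∀ n, G (n + 1) = G n ∪ (f (n + 1))ᶜ := fun n => rfl
  have hGc : ∀ n, IsClosed (G n) := by
    intro n
    induction n with
    | zero => exact hfc 0
    | succ k ih => rw [hGsucc]; exact ih.union (hfc (k + 1))
  have hGm : ∀ n, IsMeagre (G n) := by
    intro n
    induction n with
    | zero => exact closedMeagre (hfc 0) (hfi 0)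
    | succ k ih => rw [hGsucc]; exact meagreUnion ih (closedMeagre (hfc (k + 1)) (hfi (k + 1)))
  have hGi : ∀ n, interior (G n) = ∅ := fun n => intEmpty (hGm n)
  have hGmem : ∀ v j, v ∉ f j → ∀ n, j ≤ n → v ∈ G n := by
    intro v j hvj n hn
    induction n with
    | zero =>
      have : j = 0 := Nat.le_zero.mp hn
      subst this
      exact hvj
    | succ k ih =>
      rw [hGsucc]
      by_cases h : j ≤ k
      · exact Set.mem_union_left _ (ih h)
      · have : j = k + 1 := by omega
        subst this
        exact Set.mem_union_right _ hvj
  -- recursive construction of the partition and the bits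
  have key : ∀ (n m : ℕ), ∃ p : ℕ × CS, m < p.1 ∧
      ∀ v : CS, (∀ i, m ≤ i → i < p.1 → v i = p.2 i) → v ∉ G n := by
    intro n m
    obtain ⟨m', b, h1, h2⟩ := extend (hGc n) (hGi n) m
    exact ⟨(m', b), h1, h2⟩
  choose P hP1 hP2 using key
  set g : ℕ → ℕ × CS := fun n => Nat.rec ((0 : ℕ), fun _ => true)
    (fun n p => ((P n p.1).1,
      fun i => if p.1 ≤ i ∧ i < (P n p.1).1 then (P n p.1).2 i else p.2 i)) n with hg
  set u : ℕ → ℕ := fun n => (g n).1 with hu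
  have hgsucc : ∀ n, g (n + 1) = ((P n (u n)).1,
      fun i => if u n ≤ i ∧ i < (P n (u n)).1 then (P n (u n)).2 i else (g n).2 i) :=
    fun n => rfl
  have husucc : ∀ n, u (n + 1) = (P n (u n)).1 := fun n => rfl
  have humono : StrictMono u := by
    apply strictMono_nat_of_lt_succ
    intro n
    rw [husucc]
    exact hP1 n (u n)
  set w : CS := fun i => (g (i + 1)).2 i with hw
  have hstab : ∀ n i, i < u n → ∀ k, n ≤ k → (g k).2 i = (g n).2 i := by
    intro n i hi k hk
    induction k with
    | zero =>
      have : n = 0 := Nat.le_zero.mp hk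
      rw [this]
    | succ k ih =>
      by_cases h : n ≤ k
      · have hik : i < u k := lt_of_lt_of_le hi (humono.monotone h)
        rw [hgsucc]
        simp only
        rw [if_neg (by omega), ih h]
      · have : n = k + 1 := by omega
        rw [this]
  have hblock : ∀ n v, (∀ i, u n ≤ i → i < u (n + 1) → v i = w i) → v ∉ G n := by
    intro n v hv
    apply hP2 n (u n)
    intro i h1 h2
    rw [husucc] at *
    rw [hv i h1 h2]
    have hun : n ≤ u n := humono.le_apply
    have e1 : (g (i + 1)).2 i = (g (n + 1)).2 i := by
      apply hstab (n + 1) i _ (i + 1) (by omega)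
      rw [husucc]
      exact h2
    have e2 : (g (n + 1)).2 i = (P n (u n)).2 i := by
      rw [hgsucc]
      simp only
      rw [if_pos ⟨h1, h2⟩]
    show (g (i + 1)).2 i = (P n (u n)).2 i
    rw [e1, e2]
  refine ⟨u, w, rfl, humono, ?_⟩
  intro v hv
  obtain ⟨j, hj⟩ := hcov v hv
  refine ⟨j, fun n hn => ?_⟩
  by_contra h
  push_neg at h
  exact hblock n v (fun i h1 h2 => h i h1 h2) (hGmem v j hj n hn)

def MSet (t : ℕ → ℕ) : Set CS :=
  {v | ∃ m, ∀ k, m ≤ k → ∃ i, t k ≤ i ∧ i < t (k + 1) ∧ v i = true}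

lemma MSet_meagre (t : ℕ → ℕ) (ht : StrictMono t) : IsMeagre (MSet t) := by
  classical
  have hrw : MSet t =
      ⋃ m, {v : CS | ∀ k, m ≤ k → ∃ i, t k ≤ i ∧ i < t (k + 1) ∧ v i = true} := by
    ext v
    simp [MSet, Set.mem_iUnion]
  rw [hrw]
  apply isMeagre_iUnion
  intro m
  set C : Set CS := {v : CS | ∀ k, m ≤ k → ∃ i, t k ≤ i ∧ i < t (k + 1) ∧ v i = true} with hC
  have hCc : IsClosed C := by
    have : C = ⋂ k, ⋂ (_ : m ≤ k), ⋃ i ∈ Finset.Ico (t k) (t (k + 1)),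
        {v : CS | v i = true} := by
      ext v
      simp only [hC, Set.mem_setOf_eq, Set.mem_iInter, Set.mem_iUnion, Finset.mem_Ico,
        Set.mem_setOf_eq]
      constructor
      · intro h k hk
        obtain ⟨i, h1, h2, h3⟩ := h k hk
        exact ⟨i, ⟨h1, h2⟩, h3⟩
      · intro h k hk
        obtain ⟨i, ⟨h1, h2⟩, h3⟩ := h k hk
        exact ⟨i, h1, h2, h3⟩
    rw [this]
    refine isClosed_iInter fun k => isClosed_iInter fun _ => ?_
    refine isClosed_biUnion_finset ?_
    intro i _
    have hci : Continuous (fun v : CS => v i) := continuous_apply (A := fun _ : ℕ => Bool) i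
    exact IsClosed.preimage hci (isClosed_discrete {true})
  apply closedMeagre hCc
  by_contra hne
  obtain ⟨v, hv⟩ := Set.nonempty_iff_ne_empty.mpr hne
  obtain ⟨I, hI⟩ := cylSub isOpen_interior hv
  set k : ℕ := m + (I.sup id + 1) with hk
  have hkm : m ≤ k := by omega
  have htk : ∀ i ∈ I, i < t k := by
    intro i hi
    have h1 : i ≤ I.sup id := Finset.le_sup (f := id) hi
    have h2 : k ≤ t k := ht.le_apply
    omega
  set v' : CS := fun i => if i ∈ I then v i else false with hv'
  have hv'C : v' ∈ C := interior_subset (hI v' (fun i hi => by simp [hv', hi]))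
  obtain ⟨i, h1, h2, h3⟩ := hv'C k hkm
  by_cases hiI : i ∈ I
  · exact absurd h1 (not_le.mpr (htk i hiI))
  · simp [hv', hiI] at h3

lemma comb {t u : ℕ → ℕ} {w : CS} (ht : StrictMono t)
    (hu : StrictMono u) (hu0 : u 0 = 0)
    (H : MSet t ⊆ {v : CS | ∃ N, ∀ n, N ≤ n → ∃ i, u n ≤ i ∧ i < u (n + 1) ∧ v i ≠ w i}) :
    ∃ N, ∀ n, N ≤ n → ∃ k, u n ≤ t k ∧ t (k + 1) ≤ u (n + 1) := by
  classical
  by_contra hcon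
  push_neg at hcon
  -- hcon : ∀ N, ∃ n, N ≤ n ∧ ∀ k, u n ≤ t k → u (n+1) < t (k+1)
  have hbad : ∀ N : ℕ, ∃ n, N ≤ n ∧ ∀ k, u n ≤ t k → u (n + 1) < t (k + 1) := hcon
  -- choose a sparse sequence of bad indices
  set g : ℕ → ℕ := fun j => Nat.rec ((hbad 0).choose) (fun _ a => (hbad (a + 2)).choose) j with hg
  have hgsucc : ∀ j, g (j + 1) = (hbad (g j + 2)).choose := fun j => rfl
  have hgbad : ∀ j, ∀ k, u (g j) ≤ t k → u (g j + 1) < t (k + 1) := by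
    intro j
    cases j with
    | zero => exact (hbad 0).choose_spec.2
    | succ j => rw [hgsucc]; exact (hbad (g j + 2)).choose_spec.2
  have hggap : ∀ j, g j + 2 ≤ g (j + 1) := by
    intro j
    rw [hgsucc]
    exact (hbad (g j + 2)).choose_spec.1
  have hgmono : ∀ j j', j < j' → g j + 2 ≤ g j' := by
    intro j j' h
    induction j' with
    | zero => omega
    | succ k ih =>
      by_cases hk : j < k
      · have := ih hk
        have := hggap k
        omega
      · have : j = k := by omega
        subst this
        exact hggap j
  have hgge : ∀ j, j ≤ g j := by
    intro j
    induction j with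
    | zero => exact Nat.zero_le _
    | succ k ih => have := hggap k; omega
  -- block decomposition for u
  have hblk : ∀ i : ℕ, ∃ n, u n ≤ i ∧ i < u (n + 1) := by
    intro i
    have hex : ∃ n, i < u (n + 1) :=
      ⟨i, lt_of_lt_of_le (Nat.lt_succ_self i) hu.le_apply⟩
    refine ⟨Nat.find hex, ?_, Nat.find_spec hex⟩
    cases hn : Nat.find hex with
    | zero => rw [hu0]; exact Nat.zero_le i
    | succ n' =>
      have := Nat.find_min hex (by omega : n' < Nat.find hex)
      omega
  have huniq : ∀ i n1 n2, u n1 ≤ i → i < u (n1 + 1) → u n2 ≤ i → i < u (n2 + 1) → n1 = n2 := by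
    intro i n1 n2 h1 h2 h3 h4
    rcases Nat.lt_trichotomy n1 n2 with h | h | h
    · have := hu.monotone (by omega : n1 + 1 ≤ n2); omega
    · exact h
    · have := hu.monotone (by omega : n2 + 1 ≤ n1); omega
  set w' : CS := fun i => if ∃ j, u (g j) ≤ i ∧ i < u (g j + 1) then w i else true with hw'
  have hw'M : w' ∈ MSet t := by
    refine ⟨0, fun k _ => ?_⟩
    by_contra hno
    push_neg at hno
    have hch : ∀ i, t k ≤ i → i < t (k + 1) → ∃ j, u (g j) ≤ i ∧ i < u (g j + 1) := by
      intro i h1 h2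
      by_contra hc
      apply hno i h1 h2
      show (if ∃ j, u (g j) ≤ i ∧ i < u (g j + 1) then w i else true) = true
      rw [if_neg hc]
    have hk1 : t k < t (k + 1) := ht (Nat.lt_succ_self k)
    obtain ⟨j0, hj0a, hj0b⟩ := hch (t k) le_rfl hk1
    obtain ⟨j1, hj1a, hj1b⟩ := hch (t (k + 1) - 1) (by omega) (by omega)
    by_cases hsame : g j0 = g j1
    · have hbad0 := hgbad j0 k hj0a
      rw [← hsame] at hj1b
      omega
    · -- g j0 < g j1
      have hlt : g j0 < g j1 := by
        by_contra hge
        have hge' : g j1 < g j0 := by omega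
        have : u (g j1 + 1) ≤ u (g j0) := hu.monotone (by omega)
        omega
      have hmid1 : t k < u (g j0 + 1) := hj0b
      have hmid2 : u (g j0 + 1) ≤ u (g j1) := hu.monotone (by omega)
      obtain ⟨j2, hj2a, hj2b⟩ := hch (u (g j0 + 1)) (by omega) (by omega)
      have hublk : u (g j0 + 1) < u (g j0 + 2) := hu (by omega)
      have he : g j2 = g j0 + 1 :=
        huniq (u (g j0 + 1)) (g j2) (g j0 + 1) hj2a hj2b le_rfl hublk
      rcases Nat.lt_trichotomy j2 j0 with h | h | h
      · have := hgmono j2 j0 h; omega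
      · subst h; omega
      · have := hgmono j0 j2 h; omega
  obtain ⟨N, hN⟩ := H hw'M
  obtain ⟨i, h1, h2, h3⟩ := hN (g N) (hgge N)
  apply h3
  show (if ∃ j, u (g j) ≤ i ∧ i < u (g j + 1) then w i else true) = w i
  rw [if_pos ⟨N, h1, h2⟩]

def partOf (x : ℕ → ℕ) : ℕ → ℕ :=
  fun k => Nat.rec 0 (fun _ tk => tk + (Finset.range (tk + 1)).sup x + 1) k

lemma partOf_succ (x : ℕ → ℕ) (k : ℕ) :
    partOf x (k + 1) = partOf x k + (Finset.range (partOf x k + 1)).sup x + 1 := rfl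

lemma partOf_mono (x : ℕ → ℕ) : StrictMono (partOf x) :=
  strictMono_nat_of_lt_succ (fun k => by rw [partOf_succ]; omega)


end TukeyAux

theorem dominating_tukey_meager :
    TukeyReducible
      (fun x y : ℕ → ℕ => ∀ᶠ n in Filter.cofinite, x n ≤ y n)
      (fun A B : {A : Set (ℕ → Bool) // IsMeagre A} => A.1 ⊆ B.1) := by
  classical
  refine ⟨fun x => ⟨MSet (partOf x), MSet_meagre _ (partOf_mono x)⟩, ?_⟩
  intro S hS hB
  apply hS
  obtain ⟨B, hBub⟩ := hB
  obtain ⟨u, w, hu0, humono, hchop⟩ := chopped B.2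
  refine ⟨fun j => u (j + 1), ?_⟩
  intro x hx
  have hsub : MSet (partOf x) ⊆ B.1 :=
    hBub _ (Set.mem_image_of_mem _ hx)
  have hsub2 : MSet (partOf x) ⊆
      {v : CS | ∃ N, ∀ n, N ≤ n → ∃ i, u n ≤ i ∧ i < u (n + 1) ∧ v i ≠ w i} :=
    fun v hv => hchop v (hsub hv)
  obtain ⟨N, hN⟩ := comb (partOf_mono x) humono hu0 hsub2
  rw [Nat.cofinite_eq_atTop, Filter.eventually_atTop]
  refine ⟨N, fun j hj => ?_⟩
  obtain ⟨k, hk1, hk2⟩ := hN j hj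
  have hj1 : j ≤ partOf x k := le_trans humono.le_apply hk1
  have hxle : x j ≤ (Finset.range (partOf x k + 1)).sup x :=
    Finset.le_sup (Finset.mem_range.mpr (by omega))
  have := partOf_succ x k
  show x j ≤ u (j + 1)
  omega
end
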